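/- For any language P ⊆ Σ*, the set of prefixes of the iterated shuffle of P equals the iterated shuffle of the set of prefixes of P: pre(P^⧢) = (pre(P))^⧢. -/
import Mathlib


namespace ShuffleProj

variable {α : Type*}

/-- The shuffle of two words, defined inductively. -/
def shuffle : List α → List α → Set (List α)
  | u, [] => {u}
  | [], v => {v}
  | a :: u, b :: v =>
      (List.cons a) '' shuffle u (b :: v) ∪ (List.cons b) '' shuffle (a :: u) v
  termination_by u v => u.length + v.length

/-- The shuffle product of two languages. -/
def lshuffle (U V : Set (List α)) : Set (List α) :=
  {w | ∃ u ∈ U, ∃ v ∈ V, w ∈ shuffle u v}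

/-- `shufflePow P n` is `P^(⧢,n)`: `shufflePow P 1 = P ∪ {ε}` and
`shufflePow P (n+1) = shufflePow P n ⧢ (P ∪ {ε})`.  (`shufflePow P 0 = {ε}`
is a definitional device making these equations hold.) -/
def shufflePow (P : Set (List α)) : ℕ → Set (List α)
  | 0 => {[]}
  | n + 1 => lshuffle (shufflePow P n) (P ∪ {[]})

/-- The iterated shuffle `P^⧢ = ⋃_{n ≥ 1} P^(⧢,n)`. -/
def iterShuffle (P : Set (List α)) : Set (List α) :=
  ⋃ n : ℕ, shufflePow P (n + 1)

/-- The set of prefixes of words of a language. -/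
def pre (L : Set (List α)) : Set (List α) := {u | ∃ w ∈ L, u <+: w}

/-- The shuffle factors of `M ⊆ P^⧢`. -/
def SWF (P M : Set (List α)) : Set (List α) :=
  {u | u ∈ iterShuffle P ∧ ∃ w ∈ M, ∃ v ∈ iterShuffle P, w ∈ shuffle u v}

/-- `SWFn P n M`: shuffle factors of `M` with cofactor in `P^(⧢,n)`. -/
def SWFn (P : Set (List α)) (n : ℕ) (M : Set (List α)) : Set (List α) :=
  {u | u ∈ iterShuffle P ∧ ∃ w ∈ M, ∃ v ∈ shufflePow P n, w ∈ shuffle u v}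

lemma shuffle_nil_right (u : List α) : shuffle u [] = {u} := by
  cases u <;> simp [shuffle]

lemma shuffle_nil_left (v : List α) : shuffle [] v = {v} := by
  cases v <;> simp [shuffle]

lemma shuffle_cons_cons (a b : α) (u v : List α) :
    shuffle (a :: u) (b :: v) =
      (List.cons a) '' shuffle u (b :: v) ∪ (List.cons b) '' shuffle (a :: u) v := by
  simp [shuffle]

/-- cons on the left. -/
lemma cons_left_mem {w u v : List α} (a : α) (h : w ∈ shuffle u v) :
    a :: w ∈ shuffle (a :: u) v := by
  cases v with
  | nil =>
    rw [shuffle_nil_right] at h ⊢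
    simp_all
  | cons b v =>
    rw [shuffle_cons_cons]
    exact Or.inl ⟨w, h, rfl⟩

/-- cons on the right. -/
lemma cons_right_mem {w u v : List α} (b : α) (h : w ∈ shuffle u v) :
    b :: w ∈ shuffle u (b :: v) := by
  cases u with
  | nil =>
    rw [shuffle_nil_left] at h ⊢
    simp_all
  | cons a u =>
    rw [shuffle_cons_cons]
    exact Or.inr ⟨w, h, rfl⟩

lemma append_mem_shuffle (u v : List α) : u ++ v ∈ shuffle u v := by
  induction u with
  | nil => rw [shuffle_nil_left]; simp
  | cons a u ih => exact cons_left_mem a ih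

lemma append_mem_shuffle' (u v : List α) : v ++ u ∈ shuffle u v := by
  induction v with
  | nil => rw [shuffle_nil_right]; simp
  | cons b v ih => exact cons_right_mem b ih

/-- Extending the left factor by a suffix. -/
lemma append_left_mem {w u v : List α} (s : List α) (h : w ∈ shuffle u v) :
    w ++ s ∈ shuffle (u ++ s) v := by
  induction u, v using shuffle.induct generalizing w with
  | case1 u =>
    rw [shuffle_nil_right] at h ⊢
    simp_all
  | case2 v hvne =>
    rw [shuffle_nil_left] at h
    subst h
    simpa using append_mem_shuffle' s w
  | case3 a u b v ih1 ih2 =>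
    rw [shuffle_cons_cons] at h
    rcases h with ⟨w0, hw0, rfl⟩ | ⟨w0, hw0, rfl⟩
    · exact cons_left_mem a (ih1 hw0)
    · exact cons_right_mem b (ih2 hw0)

/-- Extending the right factor by a suffix. -/
lemma append_right_mem {w u v : List α} (t : List α) (h : w ∈ shuffle u v) :
    w ++ t ∈ shuffle u (v ++ t) := by
  induction u, v using shuffle.induct generalizing w with
  | case1 u =>
    rw [shuffle_nil_right] at h
    subst h
    simpa using append_mem_shuffle w t
  | case2 v hvne =>
    rw [shuffle_nil_left] at h ⊢
    simp_all
  | case3 a u b v ih1 ih2 =>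
    rw [shuffle_cons_cons] at h
    rcases h with ⟨w0, hw0, rfl⟩ | ⟨w0, hw0, rfl⟩
    · exact cons_left_mem a (ih1 hw0)
    · exact cons_right_mem b (ih2 hw0)

/-- Lemma B: a shuffle of prefixes is a prefix of a shuffle. -/
lemma shuffle_prefix_extend {w u' v' u v : List α} (h : w ∈ shuffle u' v')
    (hu : u' <+: u) (hv : v' <+: v) : ∃ w' ∈ shuffle u v, w <+: w' := by
  obtain ⟨s, rfl⟩ := hu
  obtain ⟨t, rfl⟩ := hv
  exact ⟨w ++ s ++ t, append_right_mem t (append_left_mem s h),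
    (List.prefix_append w s).trans (List.prefix_append _ t)⟩

/-- Lemma A: a prefix of a shuffle is a shuffle of prefixes. -/
lemma prefix_of_shuffle {w u v p : List α} (h : w ∈ shuffle u v) (hp : p <+: w) :
    ∃ u' v', u' <+: u ∧ v' <+: v ∧ p ∈ shuffle u' v' := by
  induction u, v using shuffle.induct generalizing w p with
  | case1 u =>
    rw [shuffle_nil_right] at h
    subst h
    exact ⟨p, [], hp, List.prefix_rfl, by rw [shuffle_nil_right]; rfl⟩
  | case2 v hvne =>
    rw [shuffle_nil_left] at h
    subst h
    exact ⟨[], p, List.nil_prefix, hp, by rw [shuffle_nil_left]; rfl⟩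
  | case3 a u b v ih1 ih2 =>
    rw [shuffle_cons_cons] at h
    rcases h with ⟨w0, hw0, rfl⟩ | ⟨w0, hw0, rfl⟩
    · cases p with
      | nil =>
        exact ⟨[], [], List.nil_prefix, List.nil_prefix, by
          rw [shuffle_nil_right]; rfl⟩
      | cons c p =>
        obtain ⟨rfl, hp0⟩ : c = a ∧ p <+: w0 := by
          rcases hp with ⟨t, ht⟩
          injection ht with h1 h2
          exact ⟨h1, ⟨t, h2⟩⟩
        obtain ⟨u', v', hu', hv', hm⟩ := ih1 hw0 hp0
        exact ⟨c :: u', v', List.cons_prefix_cons.mpr ⟨rfl, hu'⟩, hv',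
          cons_left_mem c hm⟩
    · cases p with
      | nil =>
        exact ⟨[], [], List.nil_prefix, List.nil_prefix, by
          rw [shuffle_nil_right]; rfl⟩
      | cons c p =>
        obtain ⟨rfl, hp0⟩ : c = b ∧ p <+: w0 := by
          rcases hp with ⟨t, ht⟩
          injection ht with h1 h2
          exact ⟨h1, ⟨t, h2⟩⟩
        obtain ⟨u', v', hu', hv', hm⟩ := ih2 hw0 hp0
        exact ⟨u', c :: v', hu', List.cons_prefix_cons.mpr ⟨rfl, hv'⟩,
          cons_right_mem c hm⟩

lemma prefix_shufflePow {P : Set (List α)} :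
    ∀ n, ∀ w ∈ shufflePow P n, ∀ p, p <+: w → p ∈ shufflePow (pre P) n := by
  intro n
  induction n with
  | zero =>
    intro w hw p hp
    simp only [shufflePow, Set.mem_singleton_iff] at hw ⊢
    subst hw
    simpa using hp
  | succ n ih =>
    rintro w ⟨u, hu, v, hv, hw⟩ p hp
    obtain ⟨u', v', hu', hv', hm⟩ := prefix_of_shuffle hw hp
    refine ⟨u', ih u hu u' hu', v', ?_, hm⟩
    rcases hv with hv | hv
    · exact Or.inl ⟨v, hv, hv'⟩
    · simp only [Set.mem_singleton_iff] at hv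
      subst hv
      exact Or.inr (by simpa using List.prefix_nil.mp hv')

lemma shufflePow_pre_sub {P : Set (List α)} :
    ∀ n, ∀ p ∈ shufflePow (pre P) n, ∃ w ∈ shufflePow P n, p <+: w := by
  intro n
  induction n with
  | zero =>
    intro p hp
    exact ⟨[], rfl, by simp_all [shufflePow]⟩
  | succ n ih =>
    rintro p ⟨u', hu', v', hv', hm⟩
    obtain ⟨u, hu, hupre⟩ := ih u' hu'
    have : ∃ v ∈ (P ∪ {[]} : Set (List α)), v' <+: v := by
      rcases hv' with ⟨v, hv, hvp⟩ | hv'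
      · exact ⟨v, Or.inl hv, hvp⟩
      · simp only [Set.mem_singleton_iff] at hv'
        subst hv'
        exact ⟨[], Or.inr rfl, List.nil_prefix⟩
    obtain ⟨v, hv, hvpre⟩ := this
    obtain ⟨w, hw, hpw⟩ := shuffle_prefix_extend hm hupre hvpre
    exact ⟨w, ⟨u, hu, v, hv, hw⟩, hpw⟩

/-- `pre (P^⧢) = (pre P)^⧢`. -/
theorem pre_iterShuffle (P : Set (List α)) :
    pre (iterShuffle P) = iterShuffle (pre P) := by
  ext p
  constructor
  · rintro ⟨w, hw, hp⟩
    obtain ⟨s, ⟨n, rfl⟩, hwn⟩ := hw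
    exact Set.mem_iUnion.mpr ⟨n, prefix_shufflePow (n + 1) w hwn p hp⟩
  · intro hp
    obtain ⟨s, ⟨n, rfl⟩, hpn⟩ := hp
    obtain ⟨w, hw, hpw⟩ := shufflePow_pre_sub (n + 1) p hpn
    exact ⟨w, Set.mem_iUnion.mpr ⟨n, hw⟩, hpw⟩

end ShuffleProj
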